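/- arXiv:2504.10830 — 4 statements merged into one kernel-verified Lean document; each statement's English description precedes it below -/
import Mathlib

section
/- For all real numbers x, c, x̃, c̃ with c > 0 and c̃ > 0, the following first-order lower bound holds: ln(1 + x^2/c) ≥ ln(1 + x̃^2/c̃) + 2*x̃*x/c̃ − (x̃^2/(c̃*(c̃ + x̃^2)))*(c + x^2) − x̃^2/c̃. -/
/-!
With `P = c + x²` and `Q = c̃ + x̃²` we have `1 + x²/c = P/c`. The concavity bound
`log b - log a ≤ b/a - 1` at `a = P/c`, `b = Q/c̃` leaves the algebraic inequality
`x̃²/c̃ - x²Q/(c̃P) ≤ x̃²P/(c̃Q) + x̃²/c̃ - 2x̃x/c̃`, i.e. `2x̃x ≤ x̃²t + x²/t` with `t = P/Q`,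
which is `(x̃t - x)² ≥ 0`.
-/

open Real

lemma two_mul_le_sq_mul_add_sq_div {a b t : ℝ} (ht : 0 < t) :
    2 * a * b ≤ a ^ 2 * t + b ^ 2 / t := by
  rw [← sub_nonneg]
  have h : a ^ 2 * t + b ^ 2 / t - 2 * a * b = (a * t - b) ^ 2 / t := by
    field_simp
    ring
  rw [h]
  positivity

lemma Real.log_sub_log_le_div_sub_one {a b : ℝ} (ha : 0 < a) (hb : 0 < b) :
    log b - log a ≤ b / a - 1 := by
  rw [← log_div hb.ne' ha.ne']
  exact log_le_sub_one_of_pos (div_pos hb ha)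

theorem sca_log_minorant (x c xt ct : ℝ) (hc : 0 < c) (hct : 0 < ct) :
    Real.log (1 + x ^ 2 / c) ≥
      Real.log (1 + xt ^ 2 / ct) + 2 * xt * x / ct
        - xt ^ 2 / (ct * (ct + xt ^ 2)) * (c + x ^ 2) - xt ^ 2 / ct := by
  set t := (c + x ^ 2) / (ct + xt ^ 2) with ht_def
  have ht : 0 < t := by positivity
  have hlog := log_sub_log_le_div_sub_one (a := 1 + x ^ 2 / c) (b := 1 + xt ^ 2 / ct)
    (by positivity) (by positivity)
  have hratio : (1 + xt ^ 2 / ct) / (1 + x ^ 2 / c) - 1 = (xt ^ 2 - x ^ 2 / t) / ct := by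
    rw [ht_def]
    field_simp
    ring
  have hweight : xt ^ 2 / (ct * (ct + xt ^ 2)) * (c + x ^ 2) = xt ^ 2 * t / ct := by
    rw [ht_def]
    field_simp
  have hamgm : 2 * xt * x / ct ≤ (xt ^ 2 * t + x ^ 2 / t) / ct :=
    div_le_div_of_nonneg_right (two_mul_le_sq_mul_add_sq_div ht) hct.le
  rw [hratio, sub_div] at hlog
  rw [add_div] at hamgm
  linarith
end

section
/- Let V̂ be a positive semidefinite Hermitian n×n complex matrix and g ∈ ℂⁿ a vector with gᴴ V̂ g > 0. Define w★ = (gᴴ V̂ g)^{−1/2} · V̂ g and V★ = w★ (w★)ᴴ. Then V̂ − V★ is positive semidefinite, rank(V★) ≤ 1, and gᴴ V★ g = gᴴ V̂ g. -/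
/-!
Cauchy–Schwarz for the semi-inner product `⟨x, y⟩ = xᴴ V̂ y` gives
`|xᴴ V̂ g|² ≤ (xᴴ V̂ x) (gᴴ V̂ g)`. Since `V★ = (gᴴ V̂ g)⁻¹ (V̂ g) (V̂ g)ᴴ`, the left side divided by
`gᴴ V̂ g` is exactly `xᴴ V★ x`, so `V̂ - V★` is positive semidefinite. As an outer product, `V★`
has rank at most one, and `gᴴ V★ g = |gᴴ V̂ g|² / gᴴ V̂ g = gᴴ V̂ g`.
-/

open Matrix ComplexOrder RCLike

namespace Matrix

lemma dotProduct_vecMulVec_mulVec {α m n : Type*} [CommSemiring α] [Fintype m] [Fintype n]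
    (x u : m → α) (v y : n → α) :
    x ⬝ᵥ (vecMulVec u v *ᵥ y) = (x ⬝ᵥ u) * (v ⬝ᵥ y) := by
  rw [vecMulVec_mulVec, op_smul_eq_smul, dotProduct_smul, smul_eq_mul, mul_comm]

variable {𝕜 ι : Type*} [RCLike 𝕜] [Fintype ι]

lemma star_dotProduct_vecMulVec_star_mulVec (u x : ι → 𝕜) :
    star x ⬝ᵥ (vecMulVec u (star u) *ᵥ x) = (‖star x ⬝ᵥ u‖ ^ 2 : ℝ) := by
  rw [dotProduct_vecMulVec_mulVec, star_dotProduct u x, ofReal_pow, ← mul_conj]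
  rfl

lemma IsHermitian.coe_re_star_dotProduct_mulVec_self {A : Matrix ι ι 𝕜} (hA : A.IsHermitian)
    (x : ι → 𝕜) : (re (star x ⬝ᵥ (A *ᵥ x)) : 𝕜) = star x ⬝ᵥ (A *ᵥ x) :=
  conj_eq_iff_re.mp (conj_eq_iff_im.mpr (hA.im_star_dotProduct_mulVec_self x))

lemma PosSemidef.norm_dotProduct_mulVec_sq_le {A : Matrix ι ι 𝕜} (hA : A.PosSemidef)
    (x y : ι → 𝕜) :
    ‖star x ⬝ᵥ (A *ᵥ y)‖ ^ 2 ≤ re (star x ⬝ᵥ (A *ᵥ x)) * re (star y ⬝ᵥ (A *ᵥ y)) := by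
  let := A.toSeminormedAddCommGroup hA
  let := A.toInnerProductSpace hA
  have hinner (u v : ι → 𝕜) : (inner 𝕜 u v : 𝕜) = star u ⬝ᵥ (A *ᵥ v) := dotProduct_comm _ _
  have := inner_mul_inner_self_le (𝕜 := 𝕜) x y
  rwa [norm_inner_symm y x, ← sq, hinner, hinner, hinner] at this

lemma PosSemidef.sub_smul_vecMulVec_mulVec {A : Matrix ι ι 𝕜} (hA : A.PosSemidef) (v : ι → 𝕜) :
    (A - (re (star v ⬝ᵥ (A *ᵥ v)) : 𝕜)⁻¹ •
      vecMulVec (A *ᵥ v) (star (A *ᵥ v))).PosSemidef := by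
  set q := re (star v ⬝ᵥ (A *ᵥ v))
  refine .of_dotProduct_mulVec_nonneg (hA.isHermitian.sub ?_) fun x => ?_
  · refine IsHermitian.smul ?_ (by rw [← ofReal_inv]; exact conj_ofReal _)
    rw [IsHermitian, conjTranspose_vecMulVec, star_star]
  · have hcs : q⁻¹ * ‖star x ⬝ᵥ (A *ᵥ v)‖ ^ 2 ≤ re (star x ⬝ᵥ (A *ᵥ x)) := by
      obtain hq | hq : 0 = q ∨ 0 < q := (hA.re_dotProduct_nonneg v).eq_or_lt
      · -- the junk value `0⁻¹ = 0` makes the degenerate case trivial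
        simpa [← hq] using hA.re_dotProduct_nonneg x
      · rw [inv_mul_le_iff₀ hq, mul_comm]
        exact hA.norm_dotProduct_mulVec_sq_le x v
    rw [sub_mulVec, dotProduct_sub, smul_mulVec, dotProduct_smul,
      star_dotProduct_vecMulVec_star_mulVec, ← hA.isHermitian.coe_re_star_dotProduct_mulVec_self,
      smul_eq_mul, ← ofReal_inv, ← ofReal_mul, ← ofReal_sub, ofReal_nonneg, sub_nonneg]
    exact hcs

lemma IsHermitian.star_dotProduct_smul_vecMulVec_mulVec_self {A : Matrix ι ι 𝕜}
    (hA : A.IsHermitian) {v : ι → 𝕜} (hv : re (star v ⬝ᵥ (A *ᵥ v)) ≠ 0) :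
    star v ⬝ᵥ (((re (star v ⬝ᵥ (A *ᵥ v)) : 𝕜)⁻¹ •
      vecMulVec (A *ᵥ v) (star (A *ᵥ v))) *ᵥ v) = star v ⬝ᵥ (A *ᵥ v) := by
  obtain ⟨r, hr⟩ : ∃ r : ℝ, star v ⬝ᵥ (A *ᵥ v) = r :=
    ⟨_, (hA.coe_re_star_dotProduct_mulVec_self v).symm⟩
  have hr0 : (r : 𝕜) ≠ 0 := by rwa [hr, ofReal_re, ← ofReal_ne_zero (K := 𝕜)] at hv
  rw [smul_mulVec, dotProduct_smul, dotProduct_vecMulVec_mulVec, star_dotProduct (A *ᵥ v) v, hr,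
    ofReal_re, smul_eq_mul, ← starRingEnd_apply, conj_ofReal]
  field_simp

end Matrix

theorem rank_one_construction {n : ℕ} (Vhat : Matrix (Fin n) (Fin n) ℂ)
    (hV : Vhat.PosSemidef) (g : Fin n → ℂ)
    (hq : 0 < (star g ⬝ᵥ (Vhat *ᵥ g)).re)
    (w : Fin n → ℂ) (Vstar : Matrix (Fin n) (Fin n) ℂ)
    (hw : w = ((Real.sqrt ((star g ⬝ᵥ (Vhat *ᵥ g)).re) : ℂ))⁻¹ • (Vhat *ᵥ g))
    (hVs : Vstar = Matrix.vecMulVec w (star w)) :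
    (Vhat - Vstar).PosSemidef ∧ Vstar.rank ≤ 1 ∧
      star g ⬝ᵥ (Vstar *ᵥ g) = star g ⬝ᵥ (Vhat *ᵥ g) := by
  have hVs' : Vstar = ((star g ⬝ᵥ (Vhat *ᵥ g)).re : ℂ)⁻¹ •
      vecMulVec (Vhat *ᵥ g) (star (Vhat *ᵥ g)) := by
    rw [hVs, hw, star_smul, smul_vecMulVec, vecMulVec_smul, smul_smul, ← Complex.ofReal_inv,
      Complex.star_def, Complex.conj_ofReal, ← Complex.ofReal_mul, ← mul_inv,
      Real.mul_self_sqrt hq.le, Complex.ofReal_inv]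
  refine ⟨hVs' ▸ hV.sub_smul_vecMulVec_mulVec g, hVs ▸ rank_vecMulVec_le _ _, ?_⟩
  rw [hVs']
  exact hV.isHermitian.star_dotProduct_smul_vecMulVec_mulVec_self hq.ne'
end

section
/- Let F, H, F̃, H̃ be positive reals. Then ln(1 + F/H) ≥ ln(1 + F̃/H̃) − F̃/H̃ + 2·√(F̃·F)/H̃ − (F̃·(F + H))/(H̃·(F̃ + H̃)). (This is the concave minorant of the rate function used in constraint C26 of the paper, with X = √F, X̃ = √F̃.) -/
theorem rate_concave_minorant (F H Ft Ht : ℝ)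
    (hF : 0 < F) (hH : 0 < H) (hFt : 0 < Ft) (hHt : 0 < Ht) :
    Real.log (1 + F / H) ≥
      Real.log (1 + Ft / Ht) - Ft / Ht + 2 * Real.sqrt (Ft * F) / Ht
        - Ft * (F + H) / (Ht * (Ft + Ht)) := by
  have hA : (0:ℝ) < F + H := by linarith
  have hs : (0:ℝ) < Ft + Ht := by linarith
  set t := Real.sqrt (Ft * F) with ht
  have ht0 : 0 ≤ t := Real.sqrt_nonneg _
  have ht2 : t ^ 2 = Ft * F := Real.sq_sqrt (by positivity)
  have hr : (0:ℝ) < (H * (Ft + Ht)) / (Ht * (F + H)) := by positivity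
  have hlog := Real.log_le_sub_one_of_pos hr
  have hlogr : Real.log ((H * (Ft + Ht)) / (Ht * (F + H)))
      = Real.log (1 + Ft / Ht) - Real.log (1 + F / H) := by
    rw [Real.log_div (by positivity) (by positivity),
        Real.log_mul hH.ne' hs.ne', Real.log_mul hHt.ne' hA.ne']
    have h1 : (1 : ℝ) + F / H = (F + H) / H := by field_simp; ring
    have h2 : (1 : ℝ) + Ft / Ht = (Ft + Ht) / Ht := by field_simp; ring
    rw [h1, h2, Real.log_div hA.ne' hH.ne', Real.log_div hs.ne' hHt.ne']
    ring
  rw [hlogr] at hlog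
  -- key algebraic inequality
  have key : 1 - (H * (Ft + Ht)) / (Ht * (F + H)) ≥
      -(Ft / Ht) + 2 * t / Ht - Ft * (F + H) / (Ht * (Ft + Ht)) := by
    set a := Real.sqrt F with ha
    set b := Real.sqrt Ft with hb
    have ha2 : a ^ 2 = F := Real.sq_sqrt hF.le
    have hb2 : b ^ 2 = Ft := Real.sq_sqrt hFt.le
    have htab : t = b * a := by rw [ht, ha, hb, Real.sqrt_mul hFt.le]
    rw [ge_iff_le, ← sub_nonneg, htab]
    have hexpr : 1 - H * (Ft + Ht) / (Ht * (F + H)) -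
        (-(Ft / Ht) + 2 * (b * a) / Ht - Ft * (F + H) / (Ht * (Ft + Ht))) =
        ((Ft + Ht) * a - (F + H) * b) ^ 2 / (Ht * (F + H) * (Ft + Ht)) := by
      rw [← ha2, ← hb2]
      have h1 : a ^ 2 + H > 0 := by nlinarith
      have h2 : b ^ 2 + Ht > 0 := by nlinarith
      field_simp
      ring
    rw [hexpr]
    positivity
  linarith [hlog, key]
end

section
/- Let n ≥ 1 and let e_j ∈ ℝⁿ denote the j-th standard basis vector. Given vertices z★ ≥ p ≥ z_min componentwise (with p = Proj(z★) on the segment from z_min to z★), define new vertices z^j = z★ − (z★_j − p_j)·e_j for j = 1,…,n. Then each z^j satisfies z_min ≤ z^j ≤ z★ componentwise, and the union of boxes ∪_j [z_min, z^j] contains every point x with z_min ≤ x ≤ z★ and x ≱ p strictly (i.e., every x in [z_min, z★] such that x_j ≤ p_j for at least one coordinate j). -/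
theorem polyblock_reduction_covers {n : ℕ} (hn : 1 ≤ n)
    (zmin p zstar : Fin n → ℝ) (hmp : zmin ≤ p) (hpz : p ≤ zstar)
    (znew : Fin n → Fin n → ℝ)
    (hznew : ∀ j i, znew j i = if i = j then p j else zstar i) :
    (∀ j, zmin ≤ znew j ∧ znew j ≤ zstar) ∧
      ∀ x : Fin n → ℝ, zmin ≤ x → x ≤ zstar → (∃ j, x j ≤ p j) →
        ∃ j, zmin ≤ x ∧ x ≤ znew j := by
  constructor
  · intro j
    constructor <;> intro i <;> rw [hznew] <;> split
    · next h => subst h; exact hmp i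
    · exact le_trans (hmp i) (hpz i)
    · next h => subst h; exact hpz i
    · exact le_refl _
  · rintro x hx1 hx2 ⟨j, hj⟩
    refine ⟨j, hx1, fun i => ?_⟩
    rw [hznew]
    split
    · next h => subst h; exact hj
    · exact hx2 i
end
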